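/- Let n ≥ 2 and X = ([0,1] × {0}) ∪ {(1/2, 1/m) : 1 ≤ m < n}, topologized with Euclidean neighborhoods on [0,1] × {0} and neighborhood base U_k((1/2,1/m)) = {(1/2,1/m)} ∪ (((1/2 − 1/k, 1/2 + 1/k) \ {1/2}) × {0}) at each point (1/2, 1/m). Then X is (n+1)-Hausdorff but not n-Hausdorff. -/

import Mathlib

open Set

/-- `X` is `τ`-Hausdorff: every subset `A` with `|A| ≥ τ` admits open neighborhoods
of its points with empty intersection. -/
def NHausdorff (X : Type*) [TopologicalSpace X] (τ : Cardinal) : Prop :=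
  ∀ A : Set X, τ ≤ Cardinal.mk A →
    ∃ U : X → Set X, (∀ a ∈ A, IsOpen (U a) ∧ a ∈ U a) ∧ (⋂ a ∈ A, U a) = ∅

/-- `X = ([0,1] × {0}) ∪ {(1/2, 1/m) : 1 ≤ m < n}`. -/
def S2 (n : ℕ) : Set (ℝ × ℝ) :=
  (Set.Icc (0 : ℝ) 1 ×ˢ {(0 : ℝ)}) ∪
    {p | ∃ m : ℕ, 1 ≤ m ∧ m < n ∧ p = ((1/2 : ℝ), 1/(m : ℝ))}

/-- The basic neighborhood `U_k((1/2, 1/m))`. -/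
def U2 (n m k : ℕ) : Set (S2 n) :=
  {p : S2 n | (p : ℝ × ℝ) = (1/2, 1/(m : ℝ)) ∨
    ((p : ℝ × ℝ).2 = 0 ∧ (p : ℝ × ℝ).1 ∈ Set.Ioo (1/2 - 1/(k : ℝ)) (1/2 + 1/(k : ℝ)) ∧
      (p : ℝ × ℝ).1 ≠ 1/2)}

/-- Traces on the line `[0,1] × {0}` of Euclidean open sets. -/
def lineOpens2 (n : ℕ) : Set (Set (S2 n)) :=
  {V | ∃ W : Set ℝ, IsOpen W ∧ V = {p : S2 n | (p : ℝ × ℝ).2 = 0 ∧ (p : ℝ × ℝ).1 ∈ W}}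

/-- The topology on `S2 n`: Euclidean neighborhoods on the line, and the `U_k((1/2,1/m))`
as neighborhood bases at the special points. -/
def T2ex (n : ℕ) : TopologicalSpace (S2 n) :=
  TopologicalSpace.generateFrom
    (lineOpens2 n ∪ {V | ∃ m k : ℕ, 1 ≤ m ∧ m < n ∧ 1 ≤ k ∧ V = U2 n m k})

/-!
Only the `n - 1` points `(1/2, 1/m)` lie off the segment `[0,1] × {0}`, so any `n + 1` points
include two distinct points of the segment, and these are separated by Euclidean neighborhoods.
Conversely, as `s → 1/2` with `s ≠ 1/2`, the points `(s, 0)` converge simultaneously to `(1/2, 0)`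
and to every `(1/2, 1/m)`, so any neighborhoods of these `n` points have a common point.
-/

open Filter Topology Cardinal

theorem nHausdorff_of_exists_separatedNhds {X : Type*} [TopologicalSpace X] {τ : Cardinal}
    (h : ∀ A : Set X, τ ≤ #A → ∃ p ∈ A, ∃ q ∈ A, SeparatedNhds {p} {q}) :
    NHausdorff X τ := by
  classical
  intro A hA
  obtain ⟨p, hp, q, hq, U, V, hU, hV, hpU, hqV, hUV⟩ := h A hA
  have hpq : p ≠ q := hUV.ne_of_mem (hpU rfl) (hqV rfl)
  refine ⟨fun a => if a = p then U else if a = q then V else univ, fun a _ => ?_, ?_⟩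
  · dsimp only
    split_ifs with hap haq
    · exact ⟨hU, hpU hap⟩
    · exact ⟨hV, hqV haq⟩
    · exact ⟨isOpen_univ, mem_univ a⟩
  · refine eq_empty_of_forall_notMem fun x hx => ?_
    have hxU := mem_iInter₂.1 hx p hp
    have hxV := mem_iInter₂.1 hx q hq
    simp only [if_neg hpq.symm] at hxU hxV
    exact hUV.ne_of_mem hxU hxV rfl

theorem not_nHausdorff_of_tendsto {X ι : Type*} [TopologicalSpace X] {τ : Cardinal}
    {l : Filter ι} [l.NeBot] {g : ι → X} {A : Set X} (hA : A.Finite) (hτ : τ ≤ #A)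
    (hg : ∀ a ∈ A, Tendsto g l (𝓝 a)) : ¬ NHausdorff X τ := by
  intro h
  obtain ⟨U, hU, hempty⟩ := h A hτ
  have hmem : (⋂ a ∈ A, U a) ∈ l.map g :=
    (biInter_mem hA).2 fun a ha => hg a ha ((hU a ha).1.mem_nhds (hU a ha).2)
  exact (Filter.nonempty_of_mem hmem).ne_empty hempty

namespace S2

local instance (n : ℕ) : TopologicalSpace (S2 n) := T2ex n

variable {n : ℕ}

theorem snd_eq_zero_or_exists_eq (p : S2 n) :
    (p : ℝ × ℝ).2 = 0 ∨ ∃ m : ℕ, 1 ≤ m ∧ m < n ∧ (p : ℝ × ℝ) = (1/2, 1/(m : ℝ)) := by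
  rcases p.2 with ⟨-, h⟩ | h
  · exact Or.inl h
  · exact Or.inr h

/-- The index `m` of the point `(1/2, 1/m)`; it is `0` on the segment, since `0⁻¹ = 0`. -/
noncomputable def level (p : S2 n) : ℕ := ⌊((p : ℝ × ℝ).2)⁻¹⌋₊

theorem level_lt (hn : 1 ≤ n) (p : S2 n) : level p < n := by
  rcases snd_eq_zero_or_exists_eq p with h | ⟨m, -, hmn, h⟩
  · simp only [level, h, inv_zero, Nat.floor_zero]
    omega
  · simpa [level, h] using hmn

theorem eq_of_level_eq {p q : S2 n} (h : level p = level q) (hp : (p : ℝ × ℝ).2 ≠ 0) :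
    p = q := by
  rcases snd_eq_zero_or_exists_eq p with hp0 | ⟨m, hm, -, hpm⟩
  · exact absurd hp0 hp
  rcases snd_eq_zero_or_exists_eq q with hq0 | ⟨m', -, -, hqm⟩
  · simp only [level, hpm, hq0, one_div, inv_inv, Nat.floor_natCast, inv_zero,
      Nat.floor_zero] at h
    omega
  · simp only [level, hpm, hqm, one_div, inv_inv, Nat.floor_natCast] at h
    exact Subtype.ext (hpm.trans (h ▸ hqm.symm))

theorem exists_ne_snd_eq_zero_of_succ_le_mk (hn : 1 ≤ n) {A : Set (S2 n)} (hA : n + 1 ≤ #A) :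
    ∃ p ∈ A, ∃ q ∈ A, p ≠ q ∧ (p : ℝ × ℝ).2 = 0 ∧ (q : ℝ × ℝ).2 = 0 := by
  by_contra! h
  have hinj : Function.Injective fun a : A => (⟨level a.1, level_lt hn a.1⟩ : Fin n) := by
    rintro ⟨a, ha⟩ ⟨b, hb⟩ hab
    have hab : level a = level b := Fin.mk.inj_iff.1 hab
    refine Subtype.ext ?_
    by_cases ha0 : (a : ℝ × ℝ).2 = 0
    · by_cases hb0 : (b : ℝ × ℝ).2 = 0
      · by_contra hne
        exact h a ha b hb hne ha0 hb0
      · exact (eq_of_level_eq hab.symm hb0).symm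
    · exact eq_of_level_eq hab ha0
  have hle : #A ≤ n := by simpa using mk_le_of_injective hinj
  have : ((n + 1 : ℕ) : Cardinal.{0}) ≤ n := by exact_mod_cast hA.trans hle
  simp at this

theorem isOpen_setOf_snd_eq_zero {W : Set ℝ} (hW : IsOpen W) :
    IsOpen {p : S2 n | (p : ℝ × ℝ).2 = 0 ∧ (p : ℝ × ℝ).1 ∈ W} :=
  TopologicalSpace.isOpen_generateFrom_of_mem (Or.inl ⟨W, hW, rfl⟩)

theorem separatedNhds_of_snd_eq_zero {p q : S2 n} (hpq : p ≠ q) (hp : (p : ℝ × ℝ).2 = 0)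
    (hq : (q : ℝ × ℝ).2 = 0) : SeparatedNhds {p} {q} := by
  have hx : (p : ℝ × ℝ).1 ≠ (q : ℝ × ℝ).1 := fun h =>
    hpq (Subtype.ext (Prod.ext h (hp.trans hq.symm)))
  obtain ⟨W₁, W₂, hW₁, hW₂, hpW₁, hqW₂, hW⟩ := t2_separation hx
  exact ⟨_, _, isOpen_setOf_snd_eq_zero hW₁, isOpen_setOf_snd_eq_zero hW₂,
    singleton_subset_iff.2 ⟨hp, hpW₁⟩, singleton_subset_iff.2 ⟨hq, hqW₂⟩,
    disjoint_left.2 fun _ h₁ h₂ => disjoint_left.1 hW h₁.2 h₂.2⟩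

theorem nHausdorff_succ (hn : 1 ≤ n) : NHausdorff (S2 n) (n + 1) :=
  nHausdorff_of_exists_separatedNhds fun _ hA => by
    obtain ⟨p, hp, q, hq, hpq, hp0, hq0⟩ := exists_ne_snd_eq_zero_of_succ_le_mk hn hA
    exact ⟨p, hp, q, hq, separatedNhds_of_snd_eq_zero hpq hp0 hq0⟩

theorem U2_subset_U2 (m : ℕ) {k k' : ℕ} (hk : 1 ≤ k) (hkk' : k ≤ k') :
    U2 n m k' ⊆ U2 n m k := by
  have hk0 : (0 : ℝ) < k := by exact_mod_cast hk
  have hinv : 1 / (k' : ℝ) ≤ 1 / k := one_div_le_one_div_of_le hk0 (by exact_mod_cast hkk')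
  rintro p (hp | ⟨hp0, ⟨hlo, hhi⟩, hne⟩)
  · exact Or.inl hp
  · exact Or.inr ⟨hp0, ⟨by linarith, by linarith⟩, hne⟩

theorem exists_U2_subset_of_isOpen {m : ℕ} (hm : 1 ≤ m) {x : S2 n}
    (hx : (x : ℝ × ℝ) = (1/2, 1/(m : ℝ))) {O : Set (S2 n)} (hO : IsOpen O) (hxO : x ∈ O) :
    ∃ k, 1 ≤ k ∧ U2 n m k ⊆ O := by
  have hx0 : (x : ℝ × ℝ).2 ≠ 0 := by
    simp only [hx, one_div, ne_eq, inv_eq_zero, Nat.cast_eq_zero]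
    omega
  induction hO with
  | basic V hV =>
    rcases hV with ⟨W, -, rfl⟩ | ⟨m', k, hm', -, hk, rfl⟩
    · exact absurd hxO.1 hx0
    · rcases hxO with hxm' | ⟨hx0', -⟩
      · have : m = m' := by simpa [hx] using hxm'
        exact ⟨k, hk, this ▸ subset_rfl⟩
      · exact absurd hx0' hx0
  | univ => exact ⟨1, le_rfl, subset_univ _⟩
  | inter V₁ V₂ _ _ ih₁ ih₂ =>
    obtain ⟨k₁, hk₁, h₁⟩ := ih₁ hxO.1
    obtain ⟨k₂, hk₂, h₂⟩ := ih₂ hxO.2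
    exact ⟨max k₁ k₂, hk₁.trans (le_max_left _ _),
      subset_inter ((U2_subset_U2 m hk₁ (le_max_left _ _)).trans h₁)
        ((U2_subset_U2 m hk₂ (le_max_right _ _)).trans h₂)⟩
  | sUnion S _ ih =>
    obtain ⟨V, hVS, hxV⟩ := hxO
    obtain ⟨k, hk, hV⟩ := ih V hVS hxV
    exact ⟨k, hk, hV.trans (subset_sUnion_of_mem hVS)⟩

theorem nhds_hasBasis_U2 {m : ℕ} (hm : 1 ≤ m) (hmn : m < n) {x : S2 n}
    (hx : (x : ℝ × ℝ) = (1/2, 1/(m : ℝ))) :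
    (𝓝 x).HasBasis (fun k => 1 ≤ k) (U2 n m) := by
  refine ⟨fun O => ⟨fun hO => ?_, fun ⟨k, hk, hkO⟩ => mem_of_superset ?_ hkO⟩⟩
  · obtain ⟨O', hO'O, hO', hxO'⟩ := mem_nhds_iff.1 hO
    obtain ⟨k, hk, hk'⟩ := exists_U2_subset_of_isOpen hm hx hO' hxO'
    exact ⟨k, hk, hk'.trans hO'O⟩
  · exact IsOpen.mem_nhds (TopologicalSpace.isOpen_generateFrom_of_mem
      (Or.inr ⟨m, k, hm, hmn, hk, rfl⟩)) (Or.inl hx)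

noncomputable def lineMap (n : ℕ) (s : ℝ) : S2 n :=
  ⟨((projIcc 0 1 zero_le_one s : ℝ), 0), Or.inl ⟨(projIcc 0 1 zero_le_one s).2, rfl⟩⟩

theorem coe_lineMap_of_mem {s : ℝ} (hs : s ∈ Icc 0 1) : (lineMap n s : ℝ × ℝ) = (s, 0) := by
  simp only [lineMap, projIcc_of_mem _ hs]

theorem continuous_lineMap : Continuous (lineMap n) := by
  have hclamp : Continuous fun s => (lineMap n s : ℝ × ℝ).1 :=
    continuous_subtype_val.comp continuous_projIcc
  refine continuous_generateFrom_iff.2 ?_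
  rintro _ (⟨W, hW, rfl⟩ | ⟨m, k, hm, -, -, rfl⟩)
  · convert hW.preimage hclamp using 1
    ext s
    simp [lineMap]
  · have hW : IsOpen (Ioo (1/2 - 1/(k : ℝ)) (1/2 + 1/k) ∩ {1/2}ᶜ) :=
      isOpen_Ioo.inter isOpen_compl_singleton
    convert hW.preimage hclamp using 1
    ext s
    simp [lineMap, U2, (Nat.cast_pos.2 hm).ne]

theorem tendsto_lineMap_of_eq {m : ℕ} (hm : 1 ≤ m) (hmn : m < n) {x : S2 n}
    (hx : (x : ℝ × ℝ) = (1/2, 1/(m : ℝ))) :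
    Tendsto (lineMap n) (𝓝[≠] (1/2)) (𝓝 x) := by
  refine (nhds_hasBasis_U2 hm hmn hx).tendsto_right_iff.2 fun k hk => ?_
  have hk0 : (0 : ℝ) < 1 / k := by positivity
  filter_upwards [nhdsWithin_le_nhds (Ioo_mem_nhds (by norm_num : (0 : ℝ) < 1/2)
      (by norm_num : (1/2 : ℝ) < 1)),
    nhdsWithin_le_nhds (Ioo_mem_nhds (by linarith : 1/2 - 1/(k : ℝ) < 1/2)
      (by linarith : 1/2 < 1/2 + 1/(k : ℝ))),
    self_mem_nhdsWithin] with s hs hsk hne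
  rw [U2, mem_ofPred_eq, coe_lineMap_of_mem (Ioo_subset_Icc_self hs)]
  exact Or.inr ⟨rfl, hsk, hne⟩

/-- The points `(1/2, 1/i)` for `i < n`; for `i = 0` this is `(1/2, 0)`, since `1/0 = 0`. -/
noncomputable def axisPoint (i : Fin n) : S2 n :=
  ⟨(1/2, 1/(i : ℝ)), by
    rcases Nat.eq_zero_or_pos i with hi | hi
    · exact Or.inl ⟨⟨by norm_num, by norm_num⟩, by simp [hi]⟩
    · exact Or.inr ⟨i, hi, i.2, rfl⟩⟩

theorem axisPoint_injective : Function.Injective (axisPoint (n := n)) := by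
  intro i j h
  simpa [axisPoint, Fin.ext_iff] using congrArg (fun p : S2 n => (p : ℝ × ℝ).2) h

theorem tendsto_lineMap_axisPoint (i : Fin n) :
    Tendsto (lineMap n) (𝓝[≠] (1/2)) (𝓝 (axisPoint i)) := by
  rcases Nat.eq_zero_or_pos i with hi | hi
  · have : axisPoint i = lineMap n (1/2) := by
      refine Subtype.ext ?_
      rw [coe_lineMap_of_mem (by norm_num)]
      simp [axisPoint, hi]
    exact this ▸ continuous_lineMap.continuousAt.tendsto.mono_left nhdsWithin_le_nhds
  · exact tendsto_lineMap_of_eq hi i.2 rfl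

theorem not_nHausdorff : ¬ NHausdorff (S2 n) n :=
  not_nHausdorff_of_tendsto (finite_range axisPoint)
    (by rw [mk_range_eq _ axisPoint_injective, mk_fin])
    (forall_mem_range.2 tendsto_lineMap_axisPoint)

end S2

theorem stmt_15 (n : ℕ) (hn : 2 ≤ n) :
    @NHausdorff (S2 n) (T2ex n) (n + 1) ∧ ¬ @NHausdorff (S2 n) (T2ex n) n :=
  ⟨S2.nHausdorff_succ (by omega), S2.not_nHausdorff⟩
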